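/- For all real numbers c1, c2, c3 and each j ∈ {1,2,3,4}, U_d(c1,c2,c3)·Ψ_j = e^{i h_j/2}·Ψ_j, i.e. the magic basis vectors are eigenvectors of U_d(c1,c2,c3) with eigenvalues e^{i h_j/2}. -/

import Mathlib

open Matrix Complex
open scoped Matrix Kronecker

noncomputable section

/-- Pauli matrices -/
def σx : Matrix (Fin 2) (Fin 2) ℂ := !![0, 1; 1, 0]
def σy : Matrix (Fin 2) (Fin 2) ℂ := !![0, -Complex.I; Complex.I, 0]
def σz : Matrix (Fin 2) (Fin 2) ℂ := !![1, 0; 0, -1]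

/-- H(c₁,c₂,c₃) = c₁ σx⊗σx + c₂ σy⊗σy + c₃ σz⊗σz -/
def Hmat (c1 c2 c3 : ℝ) : Matrix (Fin 2 × Fin 2) (Fin 2 × Fin 2) ℂ :=
  (c1 : ℂ) • (σx ⊗ₖ σx) + (c2 : ℂ) • (σy ⊗ₖ σy) + (c3 : ℂ) • (σz ⊗ₖ σz)

/-- U_d(c₁,c₂,c₃) = exp(i H(c₁,c₂,c₃)/2) (matrix exponential) -/
def Ud (c1 c2 c3 : ℝ) : Matrix (Fin 2 × Fin 2) (Fin 2 × Fin 2) ℂ :=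
  NormedSpace.exp ((Complex.I / 2) • Hmat c1 c2 c3)

/-- h₁ = c₁−c₂+c₃, h₂ = c₁+c₂−c₃, h₃ = −c₁−c₂−c₃, h₄ = −c₁+c₂+c₃ -/
def hval (c1 c2 c3 : ℝ) : Fin 4 → ℝ :=
  ![c1 - c2 + c3, c1 + c2 - c3, -c1 - c2 - c3, -c1 + c2 + c3]

/-- computational basis vector |ab⟩ of ℂ⁴ = ℂ²⊗ℂ², indexed by pairs -/
def ket (a b : Fin 2) : Fin 2 × Fin 2 → ℂ := fun p => if p = (a, b) then 1 else 0

/-- the magic basis Ψ₁, Ψ₂, Ψ₃, Ψ₄ -/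
def Psi : Fin 4 → (Fin 2 × Fin 2 → ℂ) :=
  ![((Real.sqrt 2 : ℂ))⁻¹ • (ket 0 0 + ket 1 1),
    (Complex.I * ((Real.sqrt 2 : ℂ))⁻¹) • (ket 0 1 + ket 1 0),
    ((Real.sqrt 2 : ℂ))⁻¹ • (ket 0 1 - ket 1 0),
    (Complex.I * ((Real.sqrt 2 : ℂ))⁻¹) • (ket 0 0 - ket 1 1)]

/-!
The three operators `σ ⊗ σ` commute, and the magic basis diagonalises them simultaneously with
eigenvalues `±1`; hence `Ψ_j` is an eigenvector of `H` with eigenvalue `h_j`. An eigenvector of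
`A` for `μ` is an eigenvector of `exp A` for `exp μ`, as one sees term by term in the exponential
series.
-/

namespace Matrix

variable {n R : Type*} [Fintype n] [DecidableEq n]

theorem pow_mulVec_of_mulVec_eq_smul [CommSemiring R] {A : Matrix n n R} {v : n → R} {μ : R}
    (h : A *ᵥ v = μ • v) (k : ℕ) : (A ^ k) *ᵥ v = μ ^ k • v := by
  induction k with
  | zero => simp
  | succ k ih => rw [pow_succ', ← mulVec_mulVec, ih, mulVec_smul, h, smul_smul, pow_succ]

attribute [local instance] Matrix.linftyOpNormedRing Matrix.linftyOpNormedAlgebra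

theorem exp_mulVec_of_mulVec_eq_smul {𝕂 : Type*} [RCLike 𝕂] {A : Matrix n n 𝕂} {v : n → 𝕂}
    {μ : 𝕂} (h : A *ᵥ v = μ • v) : NormedSpace.exp A *ᵥ v = NormedSpace.exp μ • v := by
  have hA := (NormedSpace.exp_series_hasSum_exp' (𝕂 := 𝕂) A).map (mulVec.addMonoidHomLeft v)
    (continuous_id.matrix_mulVec continuous_const)
  have hμ := (NormedSpace.exp_series_hasSum_exp' (𝕂 := 𝕂) μ).smul_const v
  refine hA.unique (hμ.congr_fun fun k => ?_)
  change ((k.factorial : 𝕂)⁻¹ • A ^ k) *ᵥ v = _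
  rw [smul_mulVec, pow_mulVec_of_mulVec_eq_smul h, smul_smul, smul_eq_mul]

end Matrix

lemma kron_σx_mulVec_Psi (j : Fin 4) :
    (σx ⊗ₖ σx) *ᵥ Psi j = (![1, 1, -1, -1] j : ℂ) • Psi j := by
  fin_cases j <;> ext ⟨a, b⟩ <;> fin_cases a <;> fin_cases b <;>
    simp [Psi, ket, σx, mulVec, dotProduct, Fintype.sum_prod_type]

lemma kron_σy_mulVec_Psi (j : Fin 4) :
    (σy ⊗ₖ σy) *ᵥ Psi j = (![-1, 1, -1, 1] j : ℂ) • Psi j := by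
  fin_cases j <;> ext ⟨a, b⟩ <;> fin_cases a <;> fin_cases b <;>
    simp [Psi, ket, σy, mulVec, dotProduct, Fintype.sum_prod_type]

lemma kron_σz_mulVec_Psi (j : Fin 4) :
    (σz ⊗ₖ σz) *ᵥ Psi j = (![1, -1, -1, 1] j : ℂ) • Psi j := by
  fin_cases j <;> ext ⟨a, b⟩ <;> fin_cases a <;> fin_cases b <;>
    simp [Psi, ket, σz, mulVec, dotProduct, Fintype.sum_prod_type]

lemma Hmat_mulVec_Psi (c1 c2 c3 : ℝ) (j : Fin 4) :
    Hmat c1 c2 c3 *ᵥ Psi j = (hval c1 c2 c3 j : ℂ) • Psi j := by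
  have hval_eq : (hval c1 c2 c3 j : ℂ) =
      c1 * ![1, 1, -1, -1] j + c2 * ![-1, 1, -1, 1] j + c3 * ![1, -1, -1, 1] j := by
    fin_cases j <;> simp [hval] <;> ring
  simp only [Hmat, add_mulVec, smul_mulVec, kron_σx_mulVec_Psi, kron_σy_mulVec_Psi,
    kron_σz_mulVec_Psi, smul_smul, ← add_smul, hval_eq]

/-- The magic basis vectors are eigenvectors of U_d(c₁,c₂,c₃) with eigenvalues e^{i h_j/2}. -/
theorem stmt2 (c1 c2 c3 : ℝ) (j : Fin 4) :
    (Ud c1 c2 c3).mulVec (Psi j) =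
      Complex.exp (Complex.I * (hval c1 c2 c3 j : ℂ) / 2) • Psi j := by
  rw [Ud, Complex.exp_eq_exp_ℂ]
  apply Matrix.exp_mulVec_of_mulVec_eq_smul
  rw [smul_mulVec, Hmat_mulVec_Psi, smul_smul]
  congr 1
  ring
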